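/- arXiv:1312.7589 — 3 statements merged into one kernel-verified Lean document; each statement's English description precedes it below -/
import Mathlib

section
/- Let u, v be positive integers with uv ≡ 0 (mod 6). If Φ denotes the maximum number of base blocks of a strictly v-cyclic 3-(u×v,4,1) packing, and a 3-(uv,4,1) packing has at most ⌊(uv/4)·(⌊((uv−1)/3)·⌊(uv−2)/2⌋⌋ − 1)⌋ blocks, then Φ ≤ ⌊(u/4)·(⌊((uv−1)/3)·⌊(uv−2)/2⌋⌋ − 1)⌋. -/
/-- Shift a block of `I_u × Z_v` by `δ ∈ Z_v` in the second coordinate. -/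
def shiftBlock {u v : ℕ} (δ : ZMod v) (B : Finset (Fin u × ZMod v)) :
    Finset (Fin u × ZMod v) :=
  B.image fun p => (p.1, p.2 + δ)

/-- A strictly `v`-cyclic `3-(u × v, 4, 1)` packing, given by its base blocks. -/
structure StrictlyCyclicPacking (u v : ℕ) where
  base : Finset (Finset (Fin u × ZMod v))
  card4 : ∀ B ∈ base, B.card = 4
  orbitInj : ∀ B₁ ∈ base, ∀ B₂ ∈ base, ∀ δ₁ δ₂ : ZMod v,
    shiftBlock δ₁ B₁ = shiftBlock δ₂ B₂ → B₁ = B₂ ∧ δ₁ = δ₂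
  packs : ∀ T : Finset (Fin u × ZMod v), T.card = 3 →
    ∀ B₁ ∈ base, ∀ B₂ ∈ base, ∀ δ₁ δ₂ : ZMod v,
      T ⊆ shiftBlock δ₁ B₁ → T ⊆ shiftBlock δ₂ B₂ → B₁ = B₂ ∧ δ₁ = δ₂

/-- An ordinary `3-(n, 4, 1)` packing: 4-subsets of an `n`-set such that each
3-subset lies in at most one block. -/
structure PlainPacking (n : ℕ) where
  blocks : Finset (Finset (Fin n))
  card4 : ∀ B ∈ blocks, B.card = 4
  packs : ∀ T : Finset (Fin n), T.card = 3 →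
    ∀ B₁ ∈ blocks, ∀ B₂ ∈ blocks, T ⊆ B₁ → T ⊆ B₂ → B₁ = B₂

lemma shiftBlock_card {u v : ℕ} (δ : ZMod v) (B : Finset (Fin u × ZMod v)) :
    (shiftBlock δ B).card = B.card := by
  apply Finset.card_image_of_injective
  intro p q h
  obtain ⟨h1, h2⟩ := Prod.mk.injEq .. ▸ h
  exact Prod.ext h1 (by simpa using add_right_cancel h2)

theorem stmt_5 (u v : ℕ) (hu : 0 < u) (hv : 0 < v) (hmod : u * v % 6 = 0)
    (hplain : ∀ Q : PlainPacking (u * v),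
      Q.blocks.card ≤ (u * v) * ((u * v - 1) * ((u * v - 2) / 2) / 3 - 1) / 4) :
    ∀ P : StrictlyCyclicPacking u v,
      P.base.card ≤ u * ((u * v - 1) * ((u * v - 2) / 2) / 3 - 1) / 4 := by
  intro P
  haveI : NeZero v := ⟨hv.ne'⟩
  have hcard : Fintype.card (Fin u × ZMod v) = u * v := by
    simp [ZMod.card]
  let e : (Fin u × ZMod v) ≃ Fin (u * v) := Fintype.equivFinOfCardEq hcard
  -- preimage lemma
  have hpre : ∀ (T : Finset (Fin u)) (S : Finset (Fin u × ZMod v)),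
      True := fun _ _ => trivial
  -- build the plain packing
  set F : Finset (Fin u × ZMod v) × ZMod v → Finset (Fin (u * v)) :=
    fun x => (shiftBlock x.2 x.1).image e with hF
  have himg_inj : Function.Injective (Finset.image e :
      Finset (Fin u × ZMod v) → Finset (Fin (u * v))) :=
    Finset.image_injective e.injective
  have hsub : ∀ (T : Finset (Fin (u * v))) (S : Finset (Fin u × ZMod v)),
      T ⊆ S.image e → T.image e.symm ⊆ S := by
    intro T S hTS p hp
    simp only [Finset.mem_image] at hp
    obtain ⟨t, ht, rfl⟩ := hp
    obtain ⟨q, hq, rfl⟩ := Finset.mem_image.mp (hTS ht)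
    simpa using hq
  let Q : PlainPacking (u * v) :=
    { blocks := (P.base ×ˢ (Finset.univ : Finset (ZMod v))).image F
      card4 := by
        intro B hB
        simp only [Finset.mem_image, Finset.mem_product] at hB
        obtain ⟨⟨B₀, δ⟩, ⟨hB₀, -⟩, rfl⟩ := hB
        rw [hF]
        rw [Finset.card_image_of_injective _ e.injective, shiftBlock_card]
        exact P.card4 _ hB₀
      packs := by
        intro T hT B₁' hB₁ B₂' hB₂ hT1 hT2
        simp only [Finset.mem_image, Finset.mem_product] at hB₁ hB₂
        obtain ⟨⟨B₁, δ₁⟩, ⟨hB₁m, -⟩, rfl⟩ := hB₁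
        obtain ⟨⟨B₂, δ₂⟩, ⟨hB₂m, -⟩, rfl⟩ := hB₂
        have hT' : (T.image e.symm).card = 3 := by
          rw [Finset.card_image_of_injective _ e.symm.injective, hT]
        obtain ⟨hB, hδ⟩ := P.packs _ hT' _ hB₁m _ hB₂m δ₁ δ₂
          (hsub _ _ hT1) (hsub _ _ hT2)
        exact congrArg _ (Prod.ext hB hδ) }
  have hQcard : Q.blocks.card = P.base.card * v := by
    have : Q.blocks.card = (P.base ×ˢ (Finset.univ : Finset (ZMod v))).card := by
      apply Finset.card_image_of_injOn
      intro x hx y hy hxy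
      simp only [Finset.mem_coe, Finset.mem_product] at hx hy
      have h1 : shiftBlock x.2 x.1 = shiftBlock y.2 y.1 := himg_inj hxy
      obtain ⟨hB, hδ⟩ := P.orbitInj _ hx.1 _ hy.1 _ _ h1
      exact Prod.ext hB hδ
    rw [this, Finset.card_product, Finset.card_univ, ZMod.card]
  have hb := hplain Q
  rw [hQcard] at hb
  set X := (u * v - 1) * ((u * v - 2) / 2) / 3 - 1 with hX
  have h4 : P.base.card * v * 4 ≤ u * v * X :=
    (Nat.le_div_iff_mul_le (by norm_num)).mp hb
  have h5 : P.base.card * 4 * v ≤ u * X * v := by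
    calc P.base.card * 4 * v = P.base.card * v * 4 := by ring
    _ ≤ u * v * X := h4
    _ = u * X * v := by ring
  have h6 : P.base.card * 4 ≤ u * X := Nat.le_of_mul_le_mul_right h5 hv
  exact (Nat.le_div_iff_mul_le (by norm_num)).mpr h6
end

section
/- Let u, v be positive integers with uv ≡ 0 (mod 6). Then ⌊(1/v)·⌊(uv/4)·(⌊((uv−1)/3)·⌊(uv−2)/2⌋⌋ − 1)⌋⌋ = ⌊(u/24)·(u²v²−3uv−6)⌋ = ⌊(u/4)·(⌊((uv−1)/3)·⌊(uv−2)/2⌋⌋ − 1)⌋, where all divisions are integer floor divisions. -/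
theorem stmt_6 (u v : ℕ) (hu : 0 < u) (hv : 0 < v) (hmod : u * v % 6 = 0) :
    (u * v * ((u * v - 1) * ((u * v - 2) / 2) / 3 - 1) / 4) / v =
        u * (u ^ 2 * v ^ 2 - 3 * (u * v) - 6) / 24 ∧
      u * (u ^ 2 * v ^ 2 - 3 * (u * v) - 6) / 24 =
        u * ((u * v - 1) * ((u * v - 2) / 2) / 3 - 1) / 4 := by
  obtain ⟨c, hc⟩ : ∃ c, u * v = 6 * c := ⟨u * v / 6, by omega⟩
  have hc1 : 1 ≤ c := by nlinarith
  have hX : c ≤ c * c := Nat.le_mul_of_pos_left _ hc1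
  have h1 : (u * v - 2) / 2 = 3 * c - 1 := by omega
  have h2 : (u * v - 1) * ((u * v - 2) / 2) = 18 * (c * c) - 9 * c + 1 := by
    rw [h1, hc]
    zify [show (1:ℕ) ≤ 6 * c by omega, show (1:ℕ) ≤ 3 * c by omega,
      show 9 * c ≤ 18 * (c * c) by nlinarith]
    ring
  set A := 6 * (c * c) - 3 * c - 1 with hA
  have key : (u * v - 1) * ((u * v - 2) / 2) / 3 - 1 = A := by
    rw [h2, hA]
    generalize c * c = X at hX ⊢
    omega
  have hsq : u ^ 2 * v ^ 2 = 36 * (c * c) := by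
    have : u ^ 2 * v ^ 2 = (u * v) * (u * v) := by ring
    rw [this, hc]; ring
  have hm : u ^ 2 * v ^ 2 - 3 * (u * v) - 6 = 6 * A := by
    rw [hsq, hc, hA]
    generalize c * c = X at hX ⊢
    omega
  have mid : u * (u ^ 2 * v ^ 2 - 3 * (u * v) - 6) / 24 = u * A / 4 := by
    rw [hm, show u * (6 * A) = 6 * (u * A) by ring, show (24:ℕ) = 6 * 4 by norm_num,
      Nat.mul_div_mul_left _ _ (by norm_num)]
  have lft : (u * v * ((u * v - 1) * ((u * v - 2) / 2) / 3 - 1) / 4) / v = u * A / 4 := by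
    rw [key, Nat.div_div_eq_div_mul, show u * v * A = v * (u * A) by ring,
      show 4 * v = v * 4 by ring, Nat.mul_div_mul_left _ _ hv]
  exact ⟨lft.trans mid.symm, by rw [mid, key]⟩
end

section
/- Let u ≡ 7 or 11 (mod 12). Then there is no strictly 2-cyclic 3-(u×2,4,1) packing attaining J(u×2,4,2) = ⌊(u/4)·⌊((2u−1)/3)·(u−1)⌋⌋ base blocks; i.e., Φ(u×2,4,2) ≤ J(u×2,4,2) − 1. -/
section Helpers
variable {u : ℕ}

lemma scp_choose3 (n : ℕ) : n.choose 3 = n * (n-1) * (n-2) / 6 := by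
  rw [Nat.choose_eq_descFactorial_div_factorial]
  congr 1
  simp [Nat.descFactorial]; ring

lemma scp_arith (u : ℕ) (hu : u % 12 = 7 ∨ u % 12 = 11) :
    (u*2).choose 3 = 8 * (u * ((2 * u - 1) * ((2 * u - 2) / 2) / 3) / 4) + 4 ∧
    1 ≤ u * ((2 * u - 1) * ((2 * u - 2) / 2) / 3) / 4 := by
  rw [scp_choose3]
  rcases hu with h | h
  · obtain ⟨k, rfl⟩ : ∃ k, u = 12*k+7 := ⟨u/12, by omega⟩
    have e1 : (2*(12*k+7)-2)/2 = 12*k+6 := by omega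
    have e2 : (2*(12*k+7)-1) * (12*k+6) / 3 = 96*k^2+100*k+26 := by
      have h1 : (2*(12*k+7)-1) = 24*k+13 := by omega
      rw [h1]
      have h2 : (24*k+13) * (12*k+6) = 3*(96*k^2+100*k+26) := by ring
      rw [h2]; exact Nat.mul_div_cancel_left _ (by norm_num)
    have e3 : (12*k+7) * (96*k^2+100*k+26) / 4 = 288*k^3+468*k^2+253*k+45 := by
      have h1 : (12*k+7) * (96*k^2+100*k+26) = 4*(288*k^3+468*k^2+253*k+45)+2 := by ring
      rw [h1]
      generalize 288*k^3+468*k^2+253*k+45 = q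
      omega
    have e4 : ((12*k+7)*2) * ((12*k+7)*2-1) * ((12*k+7)*2-2) / 6
        = 8*(288*k^3+468*k^2+253*k+45)+4 := by
      have h1 : (12*k+7)*2 = 24*k+14 := by ring
      have h2 : 24*k+14-1 = 24*k+13 := by omega
      have h3 : 24*k+14-2 = 24*k+12 := by omega
      rw [h1, h2, h3]
      have h4 : (24*k+14) * (24*k+13) * (24*k+12) = 6*(8*(288*k^3+468*k^2+253*k+45)+4) := by
        ring
      rw [h4]; exact Nat.mul_div_cancel_left _ (by norm_num)
    rw [e1, e2, e3, e4]
    exact ⟨rfl, Nat.one_le_iff_ne_zero.mpr (by positivity)⟩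
  · obtain ⟨k, rfl⟩ : ∃ k, u = 12*k+11 := ⟨u/12, by omega⟩
    have e1 : (2*(12*k+11)-2)/2 = 12*k+10 := by omega
    have e2 : (2*(12*k+11)-1) * (12*k+10) / 3 = 96*k^2+164*k+70 := by
      have h1 : (2*(12*k+11)-1) = 24*k+21 := by omega
      rw [h1]
      have h2 : (24*k+21) * (12*k+10) = 3*(96*k^2+164*k+70) := by ring
      rw [h2]; exact Nat.mul_div_cancel_left _ (by norm_num)
    have e3 : (12*k+11) * (96*k^2+164*k+70) / 4 = 288*k^3+756*k^2+661*k+192 := by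
      have h1 : (12*k+11) * (96*k^2+164*k+70) = 4*(288*k^3+756*k^2+661*k+192)+2 := by ring
      rw [h1]
      generalize 288*k^3+756*k^2+661*k+192 = q
      omega
    have e4 : ((12*k+11)*2) * ((12*k+11)*2-1) * ((12*k+11)*2-2) / 6
        = 8*(288*k^3+756*k^2+661*k+192)+4 := by
      have h1 : (12*k+11)*2 = 24*k+22 := by ring
      have h2 : 24*k+22-1 = 24*k+21 := by omega
      have h3 : 24*k+22-2 = 24*k+20 := by omega
      rw [h1, h2, h3]
      have h4 : (24*k+22) * (24*k+21) * (24*k+20) = 6*(8*(288*k^3+756*k^2+661*k+192)+4) := by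
        ring
      rw [h4]; exact Nat.mul_div_cancel_left _ (by norm_num)
    rw [e1, e2, e3, e4]
    exact ⟨rfl, Nat.one_le_iff_ne_zero.mpr (by positivity)⟩

lemma shift_inj (δ : ZMod 2) :
    Function.Injective (fun p : Fin u × ZMod 2 => (p.1, p.2 + δ)) := by
  intro p q h
  simp only [Prod.mk.injEq] at h
  exact Prod.ext h.1 (add_right_cancel h.2)

lemma card_shiftBlock (δ : ZMod 2) (B : Finset (Fin u × ZMod 2)) :
    (shiftBlock δ B).card = B.card :=
  Finset.card_image_of_injective _ (shift_inj δ)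

lemma shiftBlock_shiftBlock (δ ε : ZMod 2) (B : Finset (Fin u × ZMod 2)) :
    shiftBlock δ (shiftBlock ε B) = shiftBlock (ε + δ) B := by
  unfold shiftBlock
  rw [Finset.image_image]
  congr 1
  funext p
  simp [Function.comp, add_assoc]

lemma shiftBlock_zero (B : Finset (Fin u × ZMod 2)) : shiftBlock (0 : ZMod 2) B = B := by
  unfold shiftBlock
  have h : (fun p : Fin u × ZMod 2 => (p.1, p.2 + 0)) = id := by
    funext p; simp
  rw [h, Finset.image_id]

lemma shiftBlock_invol (B : Finset (Fin u × ZMod 2)) :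
    shiftBlock (1 : ZMod 2) (shiftBlock 1 B) = B := by
  rw [shiftBlock_shiftBlock]
  have h : (1 + 1 : ZMod 2) = 0 := by decide
  rw [h, shiftBlock_zero]

lemma shiftBlock_cancel {A B : Finset (Fin u × ZMod 2)}
    (h : shiftBlock (1 : ZMod 2) A = shiftBlock 1 B) : A = B := by
  have h2 := congrArg (shiftBlock (1 : ZMod 2)) h
  rwa [shiftBlock_invol, shiftBlock_invol] at h2

lemma shiftBlock_mono (δ : ZMod 2) {A B : Finset (Fin u × ZMod 2)} (h : A ⊆ B) :
    shiftBlock δ A ⊆ shiftBlock δ B := Finset.image_subset_image h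

lemma shiftBlock_insert (δ : ZMod 2) (w : Fin u × ZMod 2) (A : Finset (Fin u × ZMod 2)) :
    shiftBlock δ (insert w A) = insert (w.1, w.2 + δ) (shiftBlock δ A) :=
  Finset.image_insert _ _ _

lemma zmod2_add_one_ne (x : ZMod 2) : x + 1 ≠ x := by revert x; decide
lemma zmod2_add_one_add_one (x : ZMod 2) : x + 1 + 1 = x := by revert x; decide
lemma zmod2_ne_iff {x y : ZMod 2} (h : x ≠ y) : y = x + 1 := by
  revert h; revert x y; decide

lemma even_card_of_invol {α : Type*} [DecidableEq α] (f : α → α) :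
    ∀ s : Finset α, (∀ a ∈ s, f a ∈ s) → (∀ a ∈ s, f (f a) = a) → (∀ a ∈ s, f a ≠ a) →
      s.card % 2 = 0 := by
  intro s
  induction s using Finset.strongInduction with
  | _ s ih =>
    intro hmem hinv hne
    rcases s.eq_empty_or_nonempty with rfl | ⟨a, ha⟩
    · simp
    · have hfa : f a ∈ s := hmem a ha
      have hpair : ({a, f a} : Finset α) ⊆ s := by
        intro x hx
        rcases Finset.mem_insert.mp hx with rfl | hx
        · exact ha
        · rw [Finset.mem_singleton.mp hx]; exact hfa
      have hcard2 : ({a, f a} : Finset α).card = 2 := by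
        rw [Finset.card_insert_of_notMem (by simp [Ne.symm (hne a ha)]), Finset.card_singleton]
      have hss : s \ {a, f a} ⊂ s :=
        Finset.sdiff_ssubset hpair ⟨a, Finset.mem_insert_self _ _⟩
      have hmem' : ∀ b ∈ s \ {a, f a}, f b ∈ s \ {a, f a} := by
        intro b hb
        obtain ⟨hbs, hbn⟩ := Finset.mem_sdiff.mp hb
        refine Finset.mem_sdiff.mpr ⟨hmem b hbs, ?_⟩
        intro hfb
        rcases Finset.mem_insert.mp hfb with h1 | h1
        · apply hbn
          have hb2 : b = f a := by rw [← hinv b hbs, h1]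
          simp [hb2]
        · have h1 := Finset.mem_singleton.mp h1
          apply hbn
          have hb2 : b = a := by
            have h2 := congrArg f h1
            rwa [hinv b hbs, hinv a ha] at h2
          simp [hb2]
      have hrec := ih _ hss hmem' (fun b hb => hinv b (Finset.mem_sdiff.mp hb).1)
        (fun b hb => hne b (Finset.mem_sdiff.mp hb).1)
      have hc : (s \ {a, f a}).card = s.card - 2 := by
        rw [Finset.card_sdiff_of_subset hpair, hcard2]
      have h2 : 2 ≤ s.card := hcard2 ▸ Finset.card_le_card hpair
      omega

lemma exists_insert_of_sub {α : Type*} [DecidableEq α] {p T : Finset α}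
    (hsub : p ⊆ T) (hT : T.card = 3) (hp : p.card = 2) :
    ∃ w, w ∉ p ∧ T = insert w p := by
  have h1 : (T \ p).card = 1 := by rw [Finset.card_sdiff_of_subset hsub, hT, hp]
  obtain ⟨w, hw⟩ := Finset.card_eq_one.mp h1
  have hwmem : w ∈ T \ p := hw ▸ Finset.mem_singleton_self w
  refine ⟨w, (Finset.mem_sdiff.mp hwmem).2, ?_⟩
  have h2 := Finset.sdiff_union_of_subset hsub
  rw [hw] at h2
  rw [Finset.insert_eq]
  exact h2.symm

lemma card_triples_through {α : Type*} [DecidableEq α] {A p : Finset α}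
    (hp : p.card = 2) (hpA : p ⊆ A) :
    ((A.powersetCard 3).filter (fun T => p ⊆ T)).card = A.card - 2 := by
  have key : (A \ p).card = ((A.powersetCard 3).filter (fun T => p ⊆ T)).card := by
    apply Finset.card_bij (fun w _ => insert w p)
    · intro w hw
      obtain ⟨hwA, hwp⟩ := Finset.mem_sdiff.mp hw
      refine Finset.mem_filter.mpr ⟨Finset.mem_powersetCard.mpr ⟨?_, ?_⟩,
        Finset.subset_insert _ _⟩
      · exact Finset.insert_subset hwA hpA
      · rw [Finset.card_insert_of_notMem hwp, hp]
    · intro w1 h1 w2 h2 heq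
      have hw1 : w1 ∈ insert w2 p := heq ▸ Finset.mem_insert_self w1 p
      rcases Finset.mem_insert.mp hw1 with h | h
      · exact h
      · exact absurd h (Finset.mem_sdiff.mp h1).2
    · intro T hT
      obtain ⟨hTmem, hpT⟩ := Finset.mem_filter.mp hT
      obtain ⟨hTA, hT3⟩ := Finset.mem_powersetCard.mp hTmem
      obtain ⟨w, hwp, hTw⟩ := exists_insert_of_sub hpT hT3 hp
      have hwT : w ∈ T := hTw ▸ Finset.mem_insert_self w p
      exact ⟨w, Finset.mem_sdiff.mpr ⟨hTA hwT, hwp⟩, hTw.symm⟩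
  rw [← key, Finset.card_sdiff_of_subset hpA, hp]

end Helpers

theorem stmt_11 (u : ℕ) (hu : u % 12 = 7 ∨ u % 12 = 11) :
    ∀ P : StrictlyCyclicPacking u 2,
      P.base.card ≤ u * ((2 * u - 1) * ((2 * u - 2) / 2) / 3) / 4 - 1 := by
  intro P
  set b := P.base.card with hbdef
  set Tr : Finset (Finset (Fin u × ZMod 2)) :=
    (P.base ×ˢ (Finset.univ : Finset (ZMod 2))).image (fun q => shiftBlock q.2 q.1) with hTrdef
  have hTrIntro : ∀ B ∈ P.base, ∀ δ : ZMod 2, shiftBlock δ B ∈ Tr := by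
    intro B hB δ
    exact Finset.mem_image.mpr ⟨(B, δ), Finset.mem_product.mpr ⟨hB, Finset.mem_univ _⟩, rfl⟩
  have hTrMem : ∀ Bl ∈ Tr, ∃ B ∈ P.base, ∃ δ : ZMod 2, Bl = shiftBlock δ B := by
    intro Bl hBl
    obtain ⟨q, hq, rfl⟩ := Finset.mem_image.mp hBl
    exact ⟨q.1, (Finset.mem_product.mp hq).1, q.2, rfl⟩
  have hTrCard : Tr.card = 2 * b := by
    rw [hTrdef, Finset.card_image_of_injOn, Finset.card_product]
    · simp [Finset.card_univ, ZMod.card]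
      ring
    · intro q1 h1 q2 h2 heq
      simp only [Finset.coe_product, Set.mem_prod, Finset.mem_coe] at h1 h2
      obtain ⟨hB, hδ⟩ := P.orbitInj q1.1 h1.1 q2.1 h2.1 q1.2 q2.2 heq
      exact Prod.ext hB hδ
  have hTrCard4 : ∀ Bl ∈ Tr, Bl.card = 4 := by
    intro Bl hBl
    obtain ⟨B, hB, δ, rfl⟩ := hTrMem _ hBl
    rw [card_shiftBlock]; exact P.card4 B hB
  have hTrShift : ∀ Bl ∈ Tr, shiftBlock (1 : ZMod 2) Bl ∈ Tr := by
    intro Bl hBl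
    obtain ⟨B, hB, δ, rfl⟩ := hTrMem _ hBl
    rw [shiftBlock_shiftBlock]
    exact hTrIntro B hB _
  have hTrNe : ∀ Bl ∈ Tr, shiftBlock (1 : ZMod 2) Bl ≠ Bl := by
    intro Bl hBl heq
    obtain ⟨B, hB, δ, rfl⟩ := hTrMem _ hBl
    rw [shiftBlock_shiftBlock] at heq
    obtain ⟨-, hδ⟩ := P.orbitInj B hB B hB (δ + 1) δ heq
    exact zmod2_add_one_ne δ hδ
  have hDisj : ∀ Bl₁ ∈ Tr, ∀ Bl₂ ∈ Tr, Bl₁ ≠ Bl₂ →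
      Disjoint (Bl₁.powersetCard 3) (Bl₂.powersetCard 3) := by
    intro Bl₁ h1 Bl₂ h2 hne
    rw [Finset.disjoint_left]
    intro T hT1 hT2
    obtain ⟨hs1, hc1⟩ := Finset.mem_powersetCard.mp hT1
    obtain ⟨hs2, -⟩ := Finset.mem_powersetCard.mp hT2
    obtain ⟨B₁, hB₁, δ₁, rfl⟩ := hTrMem _ h1
    obtain ⟨B₂, hB₂, δ₂, rfl⟩ := hTrMem _ h2
    obtain ⟨hB, hδ⟩ := P.packs T hc1 B₁ hB₁ B₂ hB₂ δ₁ δ₂ hs1 hs2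
    exact hne (by rw [hB, hδ])
  set Cov := Tr.biUnion (fun Bl => Bl.powersetCard 3) with hCovdef
  have hCovCard : Cov.card = 8 * b := by
    rw [hCovdef, Finset.card_biUnion hDisj]
    have hterm : ∀ Bl ∈ Tr, (Bl.powersetCard 3).card = 4 := by
      intro Bl hBl
      rw [Finset.card_powersetCard, hTrCard4 Bl hBl]
      decide
    rw [Finset.sum_congr rfl hterm, Finset.sum_const, hTrCard, smul_eq_mul]
    ring
  set Tri := (Finset.univ : Finset (Fin u × ZMod 2)).powersetCard 3 with hTridef
  have huniv : (Finset.univ : Finset (Fin u × ZMod 2)).card = u * 2 := by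
    rw [Finset.card_univ, Fintype.card_prod, Fintype.card_fin, ZMod.card]
  have hTriCard : Tri.card = (u*2).choose 3 := by
    rw [hTridef, Finset.card_powersetCard, huniv]
  have hCovSub : Cov ⊆ Tri := by
    intro T hT
    rw [hCovdef] at hT
    obtain ⟨Bl, hBl, hTmem⟩ := Finset.mem_biUnion.mp hT
    obtain ⟨-, hc⟩ := Finset.mem_powersetCard.mp hTmem
    rw [hTridef]
    exact Finset.mem_powersetCard.mpr ⟨Finset.subset_univ _, hc⟩
  obtain ⟨hN, hJ1⟩ := scp_arith u hu
  by_contra hcon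
  push_neg at hcon
  have hble : 8 * b ≤ 8 * (u * ((2 * u - 1) * ((2 * u - 2) / 2) / 3) / 4) + 4 := by
    calc 8 * b = Cov.card := hCovCard.symm
    _ ≤ Tri.card := Finset.card_le_card hCovSub
    _ = (u*2).choose 3 := hTriCard
    _ = _ := hN
  have hbJ : b = u * ((2 * u - 1) * ((2 * u - 2) / 2) / 3) / 4 := by omega
  set Lv := Tri \ Cov with hLvdef
  have hLvCard : Lv.card = 4 := by
    rw [hLvdef, Finset.card_sdiff_of_subset hCovSub, hTriCard, hN, hCovCard, hbJ]
    omega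
  have hLvC3 : ∀ T ∈ Lv, T.card = 3 := by
    intro T hT
    rw [hLvdef] at hT
    have h1 := (Finset.mem_sdiff.mp hT).1
    rw [hTridef] at h1
    exact (Finset.mem_powersetCard.mp h1).2
  have hLvShift : ∀ T ∈ Lv, shiftBlock (1 : ZMod 2) T ∈ Lv := by
    intro T hT
    rw [hLvdef] at hT ⊢
    obtain ⟨hT1, hT2⟩ := Finset.mem_sdiff.mp hT
    refine Finset.mem_sdiff.mpr ⟨?_, ?_⟩
    · rw [hTridef]
      exact Finset.mem_powersetCard.mpr ⟨Finset.subset_univ _,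
        by rw [card_shiftBlock]; exact hLvC3 T hT⟩
    · intro hmem
      apply hT2
      rw [hCovdef] at hmem ⊢
      obtain ⟨Bl, hBl, hTB⟩ := Finset.mem_biUnion.mp hmem
      obtain ⟨hsub, -⟩ := Finset.mem_powersetCard.mp hTB
      refine Finset.mem_biUnion.mpr ⟨shiftBlock 1 Bl, hTrShift _ hBl,
        Finset.mem_powersetCard.mpr ⟨?_, hLvC3 T hT⟩⟩
      have h3 := shiftBlock_mono (1 : ZMod 2) hsub
      rwa [shiftBlock_invol] at h3
  have hLvNoFix : ∀ T ∈ Lv, shiftBlock (1 : ZMod 2) T ≠ T := by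
    intro T hT heq
    have h3 := hLvC3 T hT
    have hparity : T.card % 2 = 0 := by
      apply even_card_of_invol (fun x : Fin u × ZMod 2 => (x.1, x.2 + 1))
      · intro a ha
        have h4 : (a.1, a.2 + 1) ∈ shiftBlock 1 T := Finset.mem_image_of_mem _ ha
        rwa [heq] at h4
      · intro a _
        show ((a.1, a.2 + 1).1, (a.1, a.2 + 1).2 + 1) = a
        simp only []
        rw [zmod2_add_one_add_one]
      · intro a _ h
        exact zmod2_add_one_ne a.2 (congrArg Prod.snd h)
    omega
  -- pair counting
  have hsplit : ∀ p : Finset (Fin u × ZMod 2), p.card = 2 →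
      u * 2 - 2 = (Cov.filter (fun T => p ⊆ T)).card + (Lv.filter (fun T => p ⊆ T)).card ∧
      (Cov.filter (fun T => p ⊆ T)).card = 2 * (Tr.filter (fun Bl => p ⊆ Bl)).card := by
    intro p hp
    constructor
    · have h1 : (Tri.filter (fun T => p ⊆ T)).card = u * 2 - 2 := by
        rw [hTridef, card_triples_through hp (Finset.subset_univ p), huniv]
      have h2 : Cov ∪ Lv = Tri := by
        rw [hLvdef]; exact Finset.union_sdiff_of_subset hCovSub
      have hd : Disjoint Cov Lv := by
        rw [hLvdef]; exact Finset.disjoint_sdiff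
      have h3 : Disjoint (Cov.filter (fun T => p ⊆ T)) (Lv.filter (fun T => p ⊆ T)) :=
        Finset.disjoint_filter_filter hd
      rw [← h1, ← h2, Finset.filter_union, Finset.card_union_of_disjoint h3]
    · have hdisj2 : ∀ Bl₁ ∈ Tr, ∀ Bl₂ ∈ Tr, Bl₁ ≠ Bl₂ →
          Disjoint ((Bl₁.powersetCard 3).filter (fun T => p ⊆ T))
            ((Bl₂.powersetCard 3).filter (fun T => p ⊆ T)) := by
        intro Bl₁ h1 Bl₂ h2 hne
        exact Finset.disjoint_filter_filter (hDisj _ h1 _ h2 hne)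
      rw [hCovdef, Finset.filter_biUnion, Finset.card_biUnion hdisj2]
      have hterm : ∀ Bl ∈ Tr, ((Bl.powersetCard 3).filter (fun T => p ⊆ T)).card
          = if p ⊆ Bl then 2 else 0 := by
        intro Bl hBl
        by_cases hpb : p ⊆ Bl
        · rw [if_pos hpb, card_triples_through hp hpb, hTrCard4 Bl hBl]
        · rw [if_neg hpb, Finset.card_eq_zero, Finset.filter_eq_empty_iff]
          intro T hTm hpT
          exact hpb (hpT.trans (Finset.mem_powersetCard.mp hTm).1)
      rw [Finset.sum_congr rfl hterm, Finset.sum_ite, Finset.sum_const,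
        Finset.sum_const_zero, add_zero, smul_eq_mul, mul_comm]
  have hEven : ∀ p : Finset (Fin u × ZMod 2), p.card = 2 →
      (Lv.filter (fun T => p ⊆ T)).card % 2 = 0 := by
    intro p hp
    obtain ⟨h1, h2⟩ := hsplit p hp
    omega
  have hFour : ∀ p : Finset (Fin u × ZMod 2), p.card = 2 → shiftBlock (1 : ZMod 2) p = p →
      (Lv.filter (fun T => p ⊆ T)).card % 4 = 0 := by
    intro p hp hfix
    obtain ⟨h1, h2⟩ := hsplit p hp
    have ht : (Tr.filter (fun Bl => p ⊆ Bl)).card % 2 = 0 := by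
      apply even_card_of_invol (shiftBlock (1 : ZMod 2))
      · intro Bl hBl
        obtain ⟨hm, hs⟩ := Finset.mem_filter.mp hBl
        refine Finset.mem_filter.mpr ⟨hTrShift _ hm, ?_⟩
        calc p = shiftBlock 1 p := hfix.symm
        _ ⊆ shiftBlock 1 Bl := shiftBlock_mono _ hs
      · intro Bl _
        exact shiftBlock_invol Bl
      · intro Bl hBl
        exact hTrNe _ (Finset.mem_filter.mp hBl).1
    omega
  -- pick a leave triple
  obtain ⟨T, hT⟩ := Finset.card_pos.mp (by rw [hLvCard]; norm_num) 
  have hT'Lv := hLvShift T hT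
  set T' := shiftBlock (1 : ZMod 2) T with hT'def
  have hTne : T' ≠ T := hLvNoFix T hT
  have hpairsub : ({T, T'} : Finset (Finset (Fin u × ZMod 2))) ⊆ Lv := by
    intro x hx
    rcases Finset.mem_insert.mp hx with rfl | hx
    · exact hT
    · rw [Finset.mem_singleton.mp hx]; exact hT'Lv
  have hRcard : (Lv \ {T, T'}).card = 2 := by
    rw [Finset.card_sdiff_of_subset hpairsub, hLvCard,
      Finset.card_insert_of_notMem (by simp [Ne.symm hTne]), Finset.card_singleton]
  have hTwo : ∀ p : Finset (Fin u × ZMod 2), p.card = 2 → ∀ U ∈ Lv, p ⊆ U →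
      ∃ U' ∈ Lv, U' ≠ U ∧ p ⊆ U' := by
    intro p hp U hU hpU
    have hUm : U ∈ Lv.filter (fun T => p ⊆ T) := Finset.mem_filter.mpr ⟨hU, hpU⟩
    have h1 : 0 < (Lv.filter (fun T => p ⊆ T)).card := Finset.card_pos.mpr ⟨U, hUm⟩
    have h2 : 1 < (Lv.filter (fun T => p ⊆ T)).card := by
      have := hEven p hp; omega
    obtain ⟨U', hU', hne⟩ := Finset.exists_mem_ne h2 U
    obtain ⟨hU'Lv, hpU'⟩ := Finset.mem_filter.mp hU'
    exact ⟨U', hU'Lv, hne, hpU'⟩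
  by_cases hcase : ∃ e ∈ T, ∃ f ∈ T, e ≠ f ∧ e.1 = f.1
  · -- Case A : T contains a fixed pair
    obtain ⟨e, heT, f, hfT, hef, hfst⟩ := hcase
    have hsnd : f = (e.1, e.2 + 1) := by
      have h2 : e.2 ≠ f.2 := by
        intro h; exact hef (Prod.ext hfst h)
      exact Prod.ext hfst.symm (zmod2_ne_iff h2)
    set p : Finset (Fin u × ZMod 2) := {e, f} with hpdef
    have hp2 : p.card = 2 := by
      rw [hpdef, Finset.card_insert_of_notMem (by simp [hef]), Finset.card_singleton]
    have hfe : (f.1, f.2 + 1) = e := by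
      rw [hsnd]
      show ((e.1, e.2 + 1).1, (e.1, e.2 + 1).2 + 1) = e
      simp only []
      rw [zmod2_add_one_add_one]
    have hpfix : shiftBlock (1 : ZMod 2) p = p := by
      rw [hpdef, shiftBlock_insert]
      have h1 : shiftBlock (1 : ZMod 2) ({f} : Finset (Fin u × ZMod 2)) = {(f.1, f.2 + 1)} := by
        unfold shiftBlock; rw [Finset.image_singleton]
      rw [h1, hfe, ← hsnd]
      exact Finset.pair_comm f e
    have hpT : p ⊆ T := by
      rw [hpdef]
      exact Finset.insert_subset heT (Finset.singleton_subset_iff.mpr hfT)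
    have hpT' : p ⊆ T' := by
      rw [hT'def, ← hpfix]
      exact shiftBlock_mono _ hpT
    have hl2 : 1 < (Lv.filter (fun U => p ⊆ U)).card := by
      apply Finset.one_lt_card.mpr
      exact ⟨T, Finset.mem_filter.mpr ⟨hT, hpT⟩, T', Finset.mem_filter.mpr ⟨hT'Lv, hpT'⟩,
        fun h => hTne h.symm⟩
    have hl4 : (Lv.filter (fun U => p ⊆ U)).card = 4 := by
      have hm := hFour p hp2 hpfix
      have hle : (Lv.filter (fun U => p ⊆ U)).card ≤ 4 :=
        hLvCard ▸ Finset.card_filter_le _ _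
      omega
    have hallp : ∀ U ∈ Lv, p ⊆ U := by
      have heq : Lv.filter (fun U => p ⊆ U) = Lv :=
        Finset.eq_of_subset_of_card_le (Finset.filter_subset _ _) (by rw [hl4, hLvCard])
      intro U hU
      rw [← heq] at hU
      exact (Finset.mem_filter.mp hU).2
    obtain ⟨w, hwp, hTw⟩ := exists_insert_of_sub hpT (hLvC3 T hT) hp2
    have hRne : (Lv \ {T, T'}).Nonempty := Finset.card_pos.mp (by rw [hRcard]; norm_num)
    obtain ⟨S, hSmem⟩ := hRne
    obtain ⟨hSLv, hSnot⟩ := Finset.mem_sdiff.mp hSmem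
    have hSneT : S ≠ T := by intro h; exact hSnot (by simp [h])
    have hSneT' : S ≠ T' := by intro h; exact hSnot (by simp [h])
    obtain ⟨v, hvp, hSv⟩ := exists_insert_of_sub (hallp S hSLv) (hLvC3 S hSLv) hp2
    have hS'Lv := hLvShift S hSLv
    set S' := shiftBlock (1 : ZMod 2) S with hS'def
    have hS'v : S' = insert (v.1, v.2 + 1) p := by
      rw [hS'def, hSv, shiftBlock_insert, hpfix]
    have hT'w : T' = insert (w.1, w.2 + 1) p := by
      rw [hT'def, hTw, shiftBlock_insert, hpfix]
    have hS'neS : S' ≠ S := hLvNoFix S hSLv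
    have hS'neT : S' ≠ T := by
      intro h
      apply hSneT'
      have h2 : shiftBlock (1 : ZMod 2) S' = shiftBlock 1 T := by rw [h]
      rw [hS'def, shiftBlock_invol] at h2
      rw [h2, hT'def]
    have hS'neT' : S' ≠ T' := by
      intro h
      apply hSneT
      apply shiftBlock_cancel
      rw [← hS'def, ← hT'def]
      exact h
    have h4card : ({T, T', S, S'} : Finset (Finset (Fin u × ZMod 2))).card = 4 := by
      have hn1 : S ∉ ({S'} : Finset (Finset (Fin u × ZMod 2))) := by
        simp [Ne.symm hS'neS]
      have hn2 : T' ∉ ({S, S'} : Finset (Finset (Fin u × ZMod 2))) := by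
        simp [Ne.symm hSneT', Ne.symm hS'neT']
      have hn3 : T ∉ ({T', S, S'} : Finset (Finset (Fin u × ZMod 2))) := by
        simp [Ne.symm hTne, Ne.symm hSneT, Ne.symm hS'neT]
      rw [Finset.card_insert_of_notMem hn3, Finset.card_insert_of_notMem hn2,
        Finset.card_insert_of_notMem hn1, Finset.card_singleton]
    have hLvEnum : Lv = {T, T', S, S'} := by
      have hsub : ({T, T', S, S'} : Finset (Finset (Fin u × ZMod 2))) ⊆ Lv := by
        intro x hx
        simp only [Finset.mem_insert, Finset.mem_singleton] at hx
        rcases hx with rfl | rfl | rfl | rfl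
        exacts [hT, hT'Lv, hSLv, hS'Lv]
      exact (Finset.eq_of_subset_of_card_le hsub (by rw [hLvCard, h4card])).symm
    have hew : e ≠ w := by
      intro h
      apply hwp
      rw [← h, hpdef]
      exact Finset.mem_insert_self _ _
    set q : Finset (Fin u × ZMod 2) := {e, w} with hqdef
    have hq2 : q.card = 2 := by
      rw [hqdef, Finset.card_insert_of_notMem (by simp [hew]), Finset.card_singleton]
    have hwT : w ∈ T := by rw [hTw]; exact Finset.mem_insert_self _ _
    have hqT : q ⊆ T := by
      rw [hqdef]
      exact Finset.insert_subset heT (Finset.singleton_subset_iff.mpr hwT)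
    have hqsingle : Lv.filter (fun U => q ⊆ U) = {T} := by
      apply Finset.Subset.antisymm
      · intro U hU
        obtain ⟨hULv, hqU⟩ := Finset.mem_filter.mp hU
        have hwq : w ∈ q := by rw [hqdef]; simp
        have hwU : w ∈ U := hqU hwq
        rw [hLvEnum] at hULv
        simp only [Finset.mem_insert, Finset.mem_singleton] at hULv
        rcases hULv with rfl | rfl | rfl | rfl
        · exact Finset.mem_singleton_self _
        · exfalso
          rw [hT'w] at hwU
          rcases Finset.mem_insert.mp hwU with h | h
          · exact zmod2_add_one_ne w.2 (congrArg Prod.snd h).symm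
          · exact hwp h
        · exfalso
          rw [hSv] at hwU
          rcases Finset.mem_insert.mp hwU with h | h
          · exact hSneT (by rw [hSv, hTw, h])
          · exact hwp h
        · exfalso
          rw [hS'v] at hwU
          rcases Finset.mem_insert.mp hwU with h | h
          · apply hSneT'
            rw [hSv, hT'w]
            have h1 : (w.1, w.2 + 1) = v := by
              rw [h]
              show ((v.1, v.2 + 1).1, (v.1, v.2 + 1).2 + 1) = v
              simp only []
              rw [zmod2_add_one_add_one]
            rw [h1]
          · exact hwp h
      · intro x hx
        rw [Finset.mem_singleton.mp hx]
        exact Finset.mem_filter.mpr ⟨hT, hqT⟩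
    have hev := hEven q hq2
    rw [hqsingle, Finset.card_singleton] at hev
    omega
  · -- Case B : all first coordinates of T distinct
    have hdisjTT' : ∀ x ∈ T', x ∉ T := by
      intro x hxT' hxT
      rw [hT'def] at hxT'
      obtain ⟨y, hyT, hyx⟩ := Finset.mem_image.mp hxT'
      have h12 := Prod.ext_iff.mp hyx
      simp only [] at h12
      apply hcase
      refine ⟨y, hyT, x, hxT, ?_, h12.1⟩
      intro h
      rw [h] at h12
      exact zmod2_add_one_ne x.2 h12.2
    obtain ⟨a, bb, c, hab, hac, hbc, hTeq⟩ := Finset.card_eq_three.mp (hLvC3 T hT)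
    have haT : a ∈ T := by rw [hTeq]; simp
    have hbT : bb ∈ T := by rw [hTeq]; simp
    have hcT : c ∈ T := by rw [hTeq]; simp
    have hgetU : ∀ x y : Fin u × ZMod 2, x ∈ T → y ∈ T → x ≠ y →
        ∃ U ∈ Lv \ {T, T'}, ({x, y} : Finset (Fin u × ZMod 2)) ⊆ U := by
      intro x y hx hy hxy
      have hpcard : ({x, y} : Finset (Fin u × ZMod 2)).card = 2 := by
        rw [Finset.card_insert_of_notMem (by simp [hxy]), Finset.card_singleton]
      have hpT : ({x, y} : Finset (Fin u × ZMod 2)) ⊆ T :=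
        Finset.insert_subset hx (Finset.singleton_subset_iff.mpr hy)
      obtain ⟨U, hULv, hUneT, hpU⟩ := hTwo _ hpcard T hT hpT
      refine ⟨U, Finset.mem_sdiff.mpr ⟨hULv, ?_⟩, hpU⟩
      simp only [Finset.mem_insert, Finset.mem_singleton]
      push_neg
      refine ⟨hUneT, ?_⟩
      intro h
      exact hdisjTT' x (h ▸ hpU (Finset.mem_insert_self _ _)) hx
    obtain ⟨U1, hU1, hpU1⟩ := hgetU a bb haT hbT hab
    obtain ⟨U2, hU2, hpU2⟩ := hgetU a c haT hcT hac
    obtain ⟨U3, hU3, hpU3⟩ := hgetU bb c hbT hcT hbc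
    have hfinal : ∀ U ∈ Lv \ {T, T'}, a ∈ U → bb ∈ U → c ∈ U → False := by
      intro U hU haU hbU hcU
      obtain ⟨hULv, hUnot⟩ := Finset.mem_sdiff.mp hU
      have hTU : T ⊆ U := by
        rw [hTeq]
        exact Finset.insert_subset haU (Finset.insert_subset hbU
          (Finset.singleton_subset_iff.mpr hcU))
      have hTeq2 : T = U :=
        Finset.eq_of_subset_of_card_le hTU (by rw [hLvC3 U hULv, hLvC3 T hT])
      apply hUnot
      simp [← hTeq2]
    have hcases : U1 = U2 ∨ U1 = U3 ∨ U2 = U3 := by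
      by_contra hno
      push_neg at hno
      obtain ⟨h12, h13, h23⟩ := hno
      have hsub : ({U1, U2, U3} : Finset (Finset (Fin u × ZMod 2))) ⊆ Lv \ {T, T'} := by
        intro x hx
        simp only [Finset.mem_insert, Finset.mem_singleton] at hx
        rcases hx with rfl | rfl | rfl
        exacts [hU1, hU2, hU3]
      have hc3 : ({U1, U2, U3} : Finset (Finset (Fin u × ZMod 2))).card = 3 := by
        rw [Finset.card_insert_of_notMem (by simp [h12, h13]),
          Finset.card_insert_of_notMem (by simp [h23]), Finset.card_singleton]
      have hle := Finset.card_le_card hsub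
      rw [hc3, hRcard] at hle
      omega
    rcases hcases with h | h | h
    · exact hfinal U1 hU1 (hpU1 (Finset.mem_insert_self _ _)) (hpU1 (by simp))
        (by rw [h]; exact hpU2 (by simp))
    · exact hfinal U1 hU1 (hpU1 (Finset.mem_insert_self _ _)) (hpU1 (by simp))
        (by rw [h]; exact hpU3 (by simp))
    · exact hfinal U2 hU2 (hpU2 (Finset.mem_insert_self _ _))
        (by rw [h]; exact hpU3 (Finset.mem_insert_self _ _)) (hpU2 (by simp))
end
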